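/- For the d-inflated measurements {M'_k} and their submeasurements {C'_k} constructed from a set {M_k} on the original graph satisfying the even-occurrence condition, the pair family {(M'_k, C'_k)} satisfies the distance-d parity condition (Eq. 8) at every power vertex: for each power vertex u and each assignment σ of Pauli symbols to the ball of radius d around u, the number of k with M'_k|_{B_d(u)} = σ and (C'_k)_u ≠ I is even. -/

import Mathlib

open scoped Classical

inductive Pauli | I | X | Y | Z
deriving DecidableEq

noncomputable def pauliMat : Pauli → Matrix (Fin 2) (Fin 2) ℂ
  | Pauli.I => 1
  | Pauli.X => !![0, 1; 1, 0]
  | Pauli.Y => !![0, -Complex.I; Complex.I, 0]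
  | Pauli.Z => !![1, 0; 0, -1]

noncomputable def pauliProd {V : Type} [Fintype V] [DecidableEq V] (σ : V → Pauli) :
    Matrix (V → Fin 2) (V → Fin 2) ℂ :=
  fun f g => ∏ v, pauliMat (σ v) (f v) (g v)

noncomputable def graphGen {V : Type} [Fintype V] [DecidableEq V] (G : SimpleGraph V) (v : V) :
    Matrix (V → Fin 2) (V → Fin 2) ℂ :=
  pauliProd (fun u => if u = v then Pauli.X else if G.Adj u v then Pauli.Z else Pauli.I)

noncomputable def graphState {V : Type} [Fintype V] [DecidableEq V] (G : SimpleGraph V) :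
    (V → Fin 2) → ℂ :=
  fun f => (-1 : ℂ) ^ (∑ e ∈ G.edgeFinset,
      Sym2.lift ⟨fun u v => (f u : ℕ) * (f v : ℕ), fun u v => Nat.mul_comm _ _⟩ e) /
    (Real.sqrt (2 ^ Fintype.card V) : ℂ)

noncomputable def expVal {V : Type} [Fintype V] [DecidableEq V]
    (ψ : (V → Fin 2) → ℂ) (P : Matrix (V → Fin 2) (V → Fin 2) ℂ) : ℂ :=
  ∑ f, ∑ g, (starRingEnd ℂ) (ψ f) * P f g * ψ g

/-- The original graph on `V` determined by an oriented edge list `e`. -/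
def origGraph {V : Type} (m : ℕ) (e : Fin m → V × V) : SimpleGraph V :=
  SimpleGraph.fromRel (fun u v => ∃ j, e j = (u, v))

/-- Adjacency seed relation of the `d`-inflated graph: each oriented edge `e j` is
replaced by a chain of `2d` chain vertices `(j, 0), …, (j, 2d - 1)` joining its
endpoints. -/
def inflAdj {V : Type} (m d : ℕ) (e : Fin m → V × V) :
    (V ⊕ (Fin m × Fin (2 * d))) → (V ⊕ (Fin m × Fin (2 * d))) → Prop
  | Sum.inl u, Sum.inr (j, r) =>
      ((e j).1 = u ∧ (r : ℕ) = 0) ∨ ((e j).2 = u ∧ (r : ℕ) = 2 * d - 1)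
  | Sum.inr (j, r), Sum.inr (j', r') => j = j' ∧ (r : ℕ) + 1 = (r' : ℕ)
  | _, _ => False

/-- The `d`-inflated graph. -/
def inflGraph {V : Type} (m d : ℕ) (e : Fin m → V × V) :
    SimpleGraph (V ⊕ (Fin m × Fin (2 * d))) :=
  SimpleGraph.fromRel (inflAdj m d e)

/-- The stabilizer generator of the inflated graph state at the chain vertex of
edge `j` with (0-indexed) position `r`; `1` if `r` is out of range. -/
noncomputable def chainGen {V : Type} [Fintype V] [DecidableEq V] (m d : ℕ)
    (e : Fin m → V × V) (j : Fin m) (r : ℕ) :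
    Matrix ((V ⊕ (Fin m × Fin (2 * d))) → Fin 2) ((V ⊕ (Fin m × Fin (2 * d))) → Fin 2) ℂ :=
  if h : r < 2 * d then graphGen (inflGraph m d e) (Sum.inr (j, ⟨r, h⟩)) else 1

/-- The inflated generator element
`f_u = g'_u ∏_{(u,v) ∈ E} ∏_{s=1}^{d} g'_{(2s)_{(u,v)}}`; the chain vertex at
distance `2s` from `u` has 0-indexed position `2s - 1` if `e j = (u, v)` and
`2d - 2s` if `e j = (v, u)`. -/
noncomputable def inflGen {V : Type} [Fintype V] [DecidableEq V] (m d : ℕ)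
    (e : Fin m → V × V) (u : V) :
    Matrix ((V ⊕ (Fin m × Fin (2 * d))) → Fin 2) ((V ⊕ (Fin m × Fin (2 * d))) → Fin 2) ℂ :=
  graphGen (inflGraph m d e) (Sum.inl u) *
    ((List.finRange m).map (fun j =>
      ((List.range d).map (fun s =>
        if (e j).1 = u then chainGen m d e j (2 * s + 1)
        else if (e j).2 = u then chainGen m d e j (2 * d - 2 * s - 2)
        else 1)).prod)).prod

/-- The inflated measurement: the original Pauli on power vertices, `X` on all
chain vertices. -/
def inflMeas {V : Type} {m d : ℕ} (M : V → Pauli) : (V ⊕ (Fin m × Fin (2 * d))) → Pauli :=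
  Sum.elim M (fun _ => Pauli.X)

/-! A path from a power vertex `u` to any other power vertex runs through a whole chain of `2d`
chain vertices, so the ball of radius `d` around `u` contains no other power vertex; this is
certified by a potential that grows by at most one per edge (connectedness makes `dist` the
true distance rather than the junk value `0`). On that ball `M'_k` is therefore
`(M_k)_u` at `u` and `X` elsewhere, so the counted set is a union of fibres
`{k | (M_k)_u = p}` with `p ≠ I`, each of even size. -/

theorem SimpleGraph.Walk.le_add_length {V : Type*} {G : SimpleGraph V} (f : V → ℕ)
    (hf : ∀ x y, G.Adj x y → f y ≤ f x + 1) {a b : V} (p : G.Walk a b) :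
    f b ≤ f a + p.length := by
  induction p with
  | nil => simp
  | cons h _ ih =>
    rw [SimpleGraph.Walk.length_cons]
    have := hf _ _ h
    omega

theorem SimpleGraph.Reachable.le_add_dist {V : Type*} {G : SimpleGraph V} (f : V → ℕ)
    (hf : ∀ x y, G.Adj x y → f y ≤ f x + 1) {a b : V} (hab : G.Reachable a b) :
    f b ≤ f a + G.dist a b := by
  obtain ⟨p, hp⟩ := hab.exists_walk_length_eq_dist
  exact hp ▸ p.le_add_length f hf

theorem Finset.even_card_filter_comp {ι α : Type*} [Fintype ι] [DecidableEq α] (g : ι → α)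
    (Q : α → Prop) [DecidablePred Q] (hQ : ∀ a, Q a → Even (Finset.univ.filter (g · = a)).card) :
    Even (Finset.univ.filter fun i => Q (g i)).card := by
  rw [Finset.card_eq_sum_card_image g]
  refine Finset.even_sum _ fun a ha => ?_
  obtain ⟨i, hi, rfl⟩ := Finset.mem_image.mp ha
  have hQi : Q (g i) := (Finset.mem_filter.mp hi).2
  rw [Finset.filter_filter, Finset.filter_congr fun j _ =>
    and_iff_right_of_imp fun (hj : g j = g i) => show Q (g j) from hj ▸ hQi]
  exact hQ (g i) hQi

/-- A potential that is `0` at `u` and `d + 1` at every other power vertex: a chain vertex at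
position `r` lies `r + 1` steps from the tail of its edge and `2d - r` steps from its head. -/
noncomputable def inflDistBound {V : Type} (m d : ℕ) (e : Fin m → V × V) (u : V) :
    V ⊕ (Fin m × Fin (2 * d)) → ℕ
  | Sum.inl x => if x = u then 0 else d + 1
  | Sum.inr (j, r) => min (d + 1) (min (if (e j).1 = u then r + 1 else d + 1)
      (if (e j).2 = u then 2 * d - r else d + 1))

theorem inflDistBound_le_of_inflAdj {V : Type} (m d : ℕ) (e : Fin m → V × V) (u : V)
    {x y : V ⊕ (Fin m × Fin (2 * d))} (hxy : inflAdj m d e x y) :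
    inflDistBound m d e u y ≤ inflDistBound m d e u x + 1 ∧
      inflDistBound m d e u x ≤ inflDistBound m d e u y + 1 := by
  rcases x with x | ⟨j, r⟩ <;> rcases y with y | ⟨j', r'⟩ <;> simp only [inflAdj] at hxy
  · have := r'.isLt
    rcases hxy with ⟨rfl, hr⟩ | ⟨rfl, hr⟩ <;> simp only [inflDistBound] <;> split_ifs <;> omega
  · obtain ⟨rfl, hr⟩ := hxy
    simp only [inflDistBound]
    split_ifs <;> omega

theorem inflDistBound_le_of_adj {V : Type} (m d : ℕ) (e : Fin m → V × V) (u : V)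
    (x y : V ⊕ (Fin m × Fin (2 * d))) (hxy : (inflGraph m d e).Adj x y) :
    inflDistBound m d e u y ≤ inflDistBound m d e u x + 1 := by
  rcases (SimpleGraph.fromRel_adj _ _ _).mp hxy |>.2 with h | h
  · exact (inflDistBound_le_of_inflAdj m d e u h).1
  · exact (inflDistBound_le_of_inflAdj m d e u h).2

theorem lt_inflGraph_dist_inl {V : Type} (m d : ℕ) (e : Fin m → V × V)
    (hconn : (inflGraph m d e).Connected) {u v : V} (hvu : v ≠ u) :
    d < (inflGraph m d e).dist (Sum.inl u) (Sum.inl v) := by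
  have := (hconn (Sum.inl u) (Sum.inl v)).le_add_dist _ (inflDistBound_le_of_adj m d e u)
  simp only [inflDistBound, hvu, if_true, if_false] at this
  omega

theorem inflMeas_eq_of_dist_le {V : Type} {m d : ℕ} (e : Fin m → V × V)
    (hconn : (inflGraph m d e).Connected) (M : V → Pauli) {u : V}
    {w : V ⊕ (Fin m × Fin (2 * d))} (hw : (inflGraph m d e).dist (Sum.inl u) w ≤ d) :
    inflMeas M w = inflMeas (fun _ => M u) w := by
  rcases w with v | p
  · obtain rfl : v = u := by
      by_contra hvu
      exact absurd hw (not_le.mpr (lt_inflGraph_dist_inl m d e hconn hvu))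
    rfl
  · rfl

theorem stmt12_general {V : Type} [Fintype V] (m d N : ℕ)
    (e : Fin m → V × V)
    (hconn : (inflGraph m d e).Connected)
    (M : Fin N → V → Pauli)
    (heven : ∀ (v : V) (σ : Pauli), σ ≠ Pauli.I →
      Even (Finset.univ.filter (fun k => M k v = σ)).card)
    (C : Fin N → (V ⊕ (Fin m × Fin (2 * d))) → Pauli)
    (hC : ∀ k (u : V), C k (Sum.inl u) = M k u) :
    ∀ (u : V) (σ : (V ⊕ (Fin m × Fin (2 * d))) → Pauli),
      Even ((Finset.univ.filter (fun k =>
        (∀ w, (inflGraph m d e).dist (Sum.inl u) w ≤ d → inflMeas (M k) w = σ w) ∧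
        C k (Sum.inl u) ≠ Pauli.I)).card) := by
  intro u σ
  let Q : Pauli → Prop := fun p =>
    (∀ w, (inflGraph m d e).dist (Sum.inl u) w ≤ d → inflMeas (fun _ => p) w = σ w) ∧
      p ≠ Pauli.I
  have hfilter : ∀ k, ((∀ w, (inflGraph m d e).dist (Sum.inl u) w ≤ d →
      inflMeas (M k) w = σ w) ∧ C k (Sum.inl u) ≠ Pauli.I) ↔ Q (M k u) := fun k => by
    rw [hC]
    exact and_congr_left fun _ => forall₂_congr fun w hw => by
      rw [inflMeas_eq_of_dist_le e hconn (M k) hw]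
  rw [Finset.filter_congr fun k _ => hfilter k]
  exact Finset.even_card_filter_comp (fun k => M k u) Q fun p hp => heven u p hp.2

/-- Lemma 4: the inflated measurement/submeasurement pairs satisfy the distance-`d`
parity condition (Eq. 8) at every power vertex `u`: for each Pauli pattern `σ` on
the radius-`d` ball around `u`, the number of `k` with `M' k` matching `σ` on the
ball and `(C' k)_u ≠ I` is even. -/
theorem stmt12 {V : Type} [Fintype V] [LinearOrder V] (m d N : ℕ) (hd : 0 < d)
    (e : Fin m → V × V)
    (hloop : ∀ j, (e j).1 ≠ (e j).2)
    (hinj : Function.Injective e)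
    (hor : ∀ j j', e j ≠ ((e j').2, (e j').1))
    (hconn : (inflGraph m d e).Connected)
    (M : Fin N → V → Pauli)
    (heven : ∀ (v : V) (σ : Pauli), σ ≠ Pauli.I →
      Even (Finset.univ.filter (fun k => M k v = σ)).card)
    (C : Fin N → (V ⊕ (Fin m × Fin (2 * d))) → Pauli)
    (hC : ∀ k (u : V), C k (Sum.inl u) = M k u)
    (hsub : ∀ k w, C k w = Pauli.I ∨ C k w = inflMeas (M k) w) :
    ∀ (u : V) (σ : (V ⊕ (Fin m × Fin (2 * d))) → Pauli),
      Even ((Finset.univ.filter (fun k =>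
        (∀ w, (inflGraph m d e).dist (Sum.inl u) w ≤ d → inflMeas (M k) w = σ w) ∧
        C k (Sum.inl u) ≠ Pauli.I)).card) :=
  stmt12_general m d N e hconn M heven C hC
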